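/- arXiv:1503.08810 — 3 statements merged into one kernel-verified Lean document; each statement's English description precedes it below -/
import Mathlib

section
/- For all integers k ≥ 2 and n ≥ 9, k(k-1) · n^{1-k} · Σ_{r=3}^{⌈n/2⌉-2} (r-2)^{k-2} ≥ k · (1/2 - 4/n)^{k-1}. -/
/-!
Write `k = p + 2`. Shifting the index, the sum is `∑_{i=1}^{M} i ^ p` with
`M = ⌈n/2⌉ - 4 ≥ n/2 - 4`, and comparing it with `∫₀^M x ^ p dx` gives
`(p + 1) ∑ ≥ M ^ (p + 1) ≥ (n/2 - 4) ^ (p + 1)`; dividing by `n ^ (p + 1)` is the claim.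
-/

open Finset

theorem pow_succ_le_mul_sum_range_pow (p M : ℕ) :
    (M : ℝ) ^ (p + 1) ≤ (p + 1) * ∑ i ∈ range M, ((i : ℝ) + 1) ^ p := by
  have hmono : MonotoneOn (fun x : ℝ => x ^ p) (Set.Icc 0 (0 + M)) :=
    fun x hx y _ hxy => pow_le_pow_left₀ hx.1 hxy p
  have hcmp := hmono.integral_le_sum
  rw [zero_add, integral_pow, zero_pow p.succ_ne_zero, sub_zero,
    div_le_iff₀ (by positivity)] at hcmp
  simpa [mul_comm] using hcmp

theorem sum_Icc_three_sub_two_pow (p m : ℕ) :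
    ∑ r ∈ Icc 3 m, ((r : ℝ) - 2) ^ p = ∑ i ∈ range (m - 2), ((i : ℝ) + 1) ^ p := by
  rw [← Ico_add_one_right_eq_Icc, sum_Ico_eq_sum_range, show m + 1 - 3 = m - 2 by omega]
  refine sum_congr rfl fun i _ => ?_
  push_cast
  ring

/-- For integers `k ≥ 2`, `n ≥ 9`,
`k(k-1) n^{1-k} Σ_{r=3}^{⌈n/2⌉-2} (r-2)^{k-2} ≥ k (1/2 - 4/n)^{k-1}`. -/
theorem stmt_3 (k n : ℕ) (hk : 2 ≤ k) (hn : 9 ≤ n) :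
    (k : ℝ) * ((k : ℝ) - 1) * ((n : ℝ) ^ (k - 1))⁻¹ *
        ∑ r ∈ Finset.Icc 3 ((n + 1) / 2 - 2), ((r : ℝ) - 2) ^ (k - 2)
      ≥ (k : ℝ) * (1 / 2 - 4 / (n : ℝ)) ^ (k - 1) := by
  obtain ⟨p, rfl⟩ : ∃ p, k = p + 2 := ⟨k - 2, by omega⟩
  rw [sum_Icc_three_sub_two_pow, show p + 2 - 2 = p by omega, show p + 2 - 1 = p + 1 by omega]
  set M := (n + 1) / 2 - 2 - 2
  have hn_real : (9 : ℝ) ≤ n := by exact_mod_cast hn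
  have hM : (n : ℝ) / 2 - 4 ≤ M := by
    have : n ≤ 2 * M + 8 := by omega
    have : (n : ℝ) ≤ 2 * M + 8 := by exact_mod_cast this
    linarith
  have hbound : ((n : ℝ) / 2 - 4) ^ (p + 1) ≤ (p + 1) * ∑ i ∈ range M, ((i : ℝ) + 1) ^ p :=
    (pow_le_pow_left₀ (by linarith) hM _).trans (pow_succ_le_mul_sum_range_pow p M)
  rw [show (1 / 2 - 4 / (n : ℝ)) = ((n : ℝ) / 2 - 4) / n by field_simp, div_pow]
  push_cast
  rw [ge_iff_le, mul_div_assoc', div_le_iff₀ (by positivity)]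
  calc ((p : ℝ) + 2) * ((n : ℝ) / 2 - 4) ^ (p + 1)
      ≤ ((p : ℝ) + 2) * ((p + 1) * ∑ i ∈ range M, ((i : ℝ) + 1) ^ p) := by gcongr
    _ = _ := by field_simp; ring
end

section
/- For every ε > 0 there exists N such that for all natural numbers n ≥ N, if X is a binomial random variable with parameters ⌊20·ln n⌋ and 1/4, then P[X < ln n] ≤ n^{-8/5 + ε}. -/
lemma aux_log1316 : Real.log (13/16) < -(1/5) := by
  rw [Real.log_lt_iff_lt_exp (by norm_num)]
  have h5 : Real.exp (1/5) < 16/13 := by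
    have he : Real.exp (1/5) ^ (5:ℕ) = Real.exp 1 := by
      rw [← Real.exp_nat_mul]; norm_num
    have h : Real.exp (1/5) ^ (5:ℕ) < (16/13:ℝ) ^ (5:ℕ) := by
      rw [he]
      calc Real.exp 1 < 2.7182818286 := Real.exp_one_lt_d9
        _ < (16/13:ℝ)^(5:ℕ) := by norm_num
    exact lt_of_pow_lt_pow_left₀ 5 (by norm_num) h
  have hpos : 0 < Real.exp (1/5) := Real.exp_pos _
  rw [Real.exp_neg]
  rw [lt_inv_comm₀ (by norm_num) hpos]
  linarith

lemma aux_e0 : Real.log 4 + 20 * Real.log (13/16) ≤ -(13/5) := by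
  have h1 := aux_log1316
  have h2 : Real.log 4 = 2 * Real.log 2 := by
    rw [show (4:ℝ) = 2^2 by norm_num, Real.log_pow]; push_cast; ring
  have h3 : Real.log 2 < 0.6931471808 := Real.log_two_lt_d9
  rw [h2]; linarith

/-- For every `ε > 0` there is `N` such that for all `n ≥ N`, if
`X ~ Bin(⌊20 ln n⌋, 1/4)` then `P[X < ln n] ≤ n^{-8/5 + ε}`. -/
theorem stmt_11 (ε : ℝ) (hε : 0 < ε) :
    ∃ N : ℕ, ∀ n : ℕ, N ≤ n →
      (∑ t ∈ Finset.range (⌊(20 : ℝ) * Real.log n⌋₊ + 1),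
        if (t : ℝ) < Real.log n then
          ((⌊(20 : ℝ) * Real.log n⌋₊).choose t : ℝ) * (1 / 4) ^ t *
            (1 - 1 / 4) ^ (⌊(20 : ℝ) * Real.log n⌋₊ - t) else 0)
        ≤ (n : ℝ) ^ (-(8 : ℝ) / 5 + ε) := by
  refine ⟨2, fun n hn => ?_⟩
  have hn2 : (2:ℝ) ≤ (n:ℝ) := by exact_mod_cast hn
  have hn1 : (1:ℝ) ≤ (n:ℝ) := by linarith
  have hnpos : (0:ℝ) < (n:ℝ) := by linarith
  set a := Real.log n with ha_def
  have ha : 0 ≤ a := Real.log_nonneg hn1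
  set m := ⌊(20 : ℝ) * Real.log n⌋₊ with hm_def
  have hmx : (20:ℝ) * a - 1 < (m:ℝ) := by
    have := Nat.sub_one_lt_floor ((20:ℝ) * a)
    simpa [hm_def, ha_def] using this
  -- Step 1: Chernoff weighting
  have h1 : (∑ t ∈ Finset.range (m + 1),
        if (t : ℝ) < a then
          (m.choose t : ℝ) * (1/4) ^ t * (1 - 1/4) ^ (m - t) else 0)
      ≤ (4:ℝ) ^ a * ∑ t ∈ Finset.range (m + 1),
          (1/16:ℝ) ^ t * (3/4) ^ (m - t) * (m.choose t : ℝ) := by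
    rw [Finset.mul_sum]
    apply Finset.sum_le_sum
    intro t _
    split_ifs with ht
    · have h4 : (1:ℝ) ≤ (4:ℝ) ^ (a - (t:ℝ)) :=
        Real.one_le_rpow (by norm_num) (by linarith)
      have heq : (4:ℝ) ^ (a - (t:ℝ)) = (4:ℝ) ^ a * (1/4:ℝ) ^ t := by
        rw [Real.rpow_sub (by norm_num), Real.rpow_natCast, div_eq_mul_inv,
          one_div, inv_pow]
      have h4' : (1:ℝ) ≤ (4:ℝ) ^ a * (1/4:ℝ) ^ t := heq ▸ h4
      have hnn : (0:ℝ) ≤ (1/4:ℝ) ^ t * (3/4) ^ (m - t) * (m.choose t : ℝ) := by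
        positivity
      have := mul_le_mul_of_nonneg_left h4' hnn
      calc (m.choose t : ℝ) * (1/4) ^ t * (1 - 1/4) ^ (m - t)
          = ((1/4:ℝ) ^ t * (3/4) ^ (m - t) * (m.choose t : ℝ)) * 1 := by
            norm_num; ring
        _ ≤ ((1/4:ℝ) ^ t * (3/4) ^ (m - t) * (m.choose t : ℝ)) *
            ((4:ℝ) ^ a * (1/4:ℝ) ^ t) := this
        _ = (4:ℝ) ^ a * ((1/16:ℝ) ^ t * (3/4) ^ (m - t) * (m.choose t : ℝ)) := by
            rw [show (1/16:ℝ) = (1/4) * (1/4) by norm_num, mul_pow]; ring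
    · positivity
  -- Step 2: binomial theorem
  have h2 : ∑ t ∈ Finset.range (m + 1),
      (1/16:ℝ) ^ t * (3/4) ^ (m - t) * (m.choose t : ℝ) = (13/16:ℝ) ^ m := by
    rw [show (13/16:ℝ) = 1/16 + 3/4 by norm_num, add_pow]
  -- Step 3: bound the power of 13/16
  have h3 : (13/16:ℝ) ^ m ≤ (16/13) * (13/16:ℝ) ^ ((20:ℝ) * a) := by
    have hmono : (13/16:ℝ) ^ ((m:ℝ)) ≤ (13/16:ℝ) ^ ((20:ℝ) * a - 1) :=
      Real.rpow_le_rpow_of_exponent_ge (by norm_num) (by norm_num) (le_of_lt hmx)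
    have hsplit : (13/16:ℝ) ^ ((20:ℝ) * a - 1)
        = (16/13) * (13/16:ℝ) ^ ((20:ℝ) * a) := by
      rw [Real.rpow_sub (by norm_num), Real.rpow_one]; ring
    calc (13/16:ℝ) ^ m = (13/16:ℝ) ^ ((m:ℝ)) := (Real.rpow_natCast _ m).symm
      _ ≤ (13/16:ℝ) ^ ((20:ℝ) * a - 1) := hmono
      _ = (16/13) * (13/16:ℝ) ^ ((20:ℝ) * a) := hsplit
  -- Step 4: combine into a power of n
  set e0 := Real.log 4 + 20 * Real.log (13/16) with he0_def
  have he0 : e0 ≤ -(13/5) := aux_e0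
  have h4 : (4:ℝ) ^ a * (13/16:ℝ) ^ ((20:ℝ) * a) = (n:ℝ) ^ e0 := by
    rw [Real.rpow_def_of_pos (by norm_num : (0:ℝ) < 4),
      Real.rpow_def_of_pos (by norm_num : (0:ℝ) < 13/16),
      Real.rpow_def_of_pos hnpos, ← Real.exp_add]
    congr 1
    rw [he0_def, ha_def]; ring
  -- Step 5: final comparison
  have h5 : (16/13:ℝ) * (n:ℝ) ^ e0 ≤ (n:ℝ) ^ (-(8:ℝ)/5 + ε) := by
    have hδ : (1:ℝ) ≤ (-(8:ℝ)/5 + ε) - e0 := by linarith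
    have hg : (16/13:ℝ) ≤ (n:ℝ) ^ ((-(8:ℝ)/5 + ε) - e0) := by
      calc (16/13:ℝ) ≤ (n:ℝ) := by linarith
        _ = (n:ℝ) ^ (1:ℝ) := (Real.rpow_one _).symm
        _ ≤ (n:ℝ) ^ ((-(8:ℝ)/5 + ε) - e0) :=
            Real.rpow_le_rpow_of_exponent_le hn1 hδ
    calc (16/13:ℝ) * (n:ℝ) ^ e0
        ≤ (n:ℝ) ^ ((-(8:ℝ)/5 + ε) - e0) * (n:ℝ) ^ e0 :=
          mul_le_mul_of_nonneg_right hg (Real.rpow_nonneg (le_of_lt hnpos) _)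
      _ = (n:ℝ) ^ (-(8:ℝ)/5 + ε) := by
          rw [← Real.rpow_add hnpos]; ring_nf
  calc (∑ t ∈ Finset.range (m + 1),
        if (t : ℝ) < a then
          (m.choose t : ℝ) * (1/4) ^ t * (1 - 1/4) ^ (m - t) else 0)
      ≤ (4:ℝ) ^ a * ∑ t ∈ Finset.range (m + 1),
          (1/16:ℝ) ^ t * (3/4) ^ (m - t) * (m.choose t : ℝ) := h1
    _ = (4:ℝ) ^ a * (13/16:ℝ) ^ m := by rw [h2]
    _ ≤ (4:ℝ) ^ a * ((16/13) * (13/16:ℝ) ^ ((20:ℝ) * a)) :=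
        mul_le_mul_of_nonneg_left h3 (Real.rpow_nonneg (by norm_num) _)
    _ = (16/13:ℝ) * ((4:ℝ) ^ a * (13/16:ℝ) ^ ((20:ℝ) * a)) := by ring
    _ = (16/13:ℝ) * (n:ℝ) ^ e0 := by rw [h4]
    _ ≤ (n:ℝ) ^ (-(8:ℝ)/5 + ε) := h5
end

section
/- Let ω : ℕ → ℝ be any function with ω(n) → ∞ as n → ∞, and let k = k(n) = ⌊√n/(ω(n)·ln n)⌋. For each n, let each of k zombies independently choose a sequence (σ_t)_{t=1}^{4n} of i.i.d. uniformly random permutations of a 4-element set of directions {U, D, L, R}. Call a sequence regular if for every direction α ∈ {U,D,L,R} and every interval I of ⌊20·ln n⌋ consecutive integers contained in [1, 4n], there are at least ⌈ln n⌉ indices i ∈ I such that α is the first symbol of the permutation σ_i. Then the probability that the sequences of all k zombies are regular tends to 1 as n → ∞. -/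
open Filter

/-- A sequence of `4n` orderings (permutations, where `σ i 0` is the first symbol of
the `i`-th ordering) of a 4-element set of directions is *regular* if for every
direction `α` and every interval of `⌊20 ln n⌋` consecutive time steps within the
`4n` steps, there are at least `⌈ln n⌉` steps `i` in the interval whose first symbol
is `α`. -/
def FirstSymbolRegular (n : ℕ) (σ : Fin (4 * n) → Equiv.Perm (Fin 4)) : Prop :=
  ∀ α : Fin 4, ∀ a : ℕ, a + ⌊(20 : ℝ) * Real.log n⌋₊ ≤ 4 * n →
    ⌈Real.log n⌉₊ ≤
      {i : Fin (4 * n) |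
        a ≤ (i : ℕ) ∧ (i : ℕ) < a + ⌊(20 : ℝ) * Real.log n⌋₊ ∧ σ i 0 = α}.ncard

/-!
For one zombie, one direction `α` and one window of `m = ⌊20 ln n⌋` steps, the number `S` of
steps of the window whose first symbol is `α` is binomial with parameters `m` and `1/4`.
Its generating function gives the Chernoff-type bound
`P(S < t) ≤ E[x^S] / x^t = ((x + 3)/4)^m / x^t` for `0 < x ≤ 1`; with `x = e⁻²` and
`t = ⌈ln n⌉` this is at most `e^{11/5} / n²`. A union bound over the `4(4n + 1)` choices of
direction and window and over the `k ≤ √n` zombies leaves a failure probability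
`O(n^{-1/2})`.
-/

open Finset Real

section IndependentCoordinates

variable {ι X : Type*} [Fintype ι] [DecidableEq ι] [Fintype X]

theorem sum_pow_card_filter_apply (p : X → Prop) [DecidablePred p] (I : Finset ι) (x : ℝ) :
    ∑ f : ι → X, x ^ #{i ∈ I | p (f i)} =
      (#{y | p y} * x + #{y | ¬ p y}) ^ #I * Fintype.card X ^ #Iᶜ := by
  let g (i : ι) (y : X) : ℝ := if i ∈ I then (if p y then x else 1) else 1
  have hpow (f : ι → X) : x ^ #{i ∈ I | p (f i)} = ∏ i, g i (f i) := by
    rw [← prod_const, prod_filter, ← Fintype.prod_ite_mem]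
  have hsum (i : ι) :
      ∑ y, g i y = if i ∈ I then #{y | p y} * x + #{y | ¬ p y} else Fintype.card X := by
    by_cases hi : i ∈ I <;> simp [g, hi, sum_ite]
  simp_rw [hpow, ← Fintype.prod_sum, hsum, prod_ite, prod_const]
  congr 1
  · simp
  · congr 2
    ext
    simp

theorem card_filter_card_filter_lt_div_le [Nonempty X] (p : X → Prop) [DecidablePred p]
    (I : Finset ι) (t : ℕ) {x : ℝ} (hx0 : 0 < x) (hx1 : x ≤ 1) :
    (#{f : ι → X | #{i ∈ I | p (f i)} < t} : ℝ) / Fintype.card (ι → X) ≤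
      ((#{y | p y} * x + #{y | ¬ p y}) / Fintype.card X) ^ #I / x ^ t := by
  have hmarkov : (#{f : ι → X | #{i ∈ I | p (f i)} < t} : ℝ) * x ^ t ≤
      ∑ f : ι → X, x ^ #{i ∈ I | p (f i)} := by
    rw [← nsmul_eq_mul, ← sum_const]
    refine (sum_le_sum fun f hf => pow_le_pow_of_le_one hx0.le hx1 (mem_filter.1 hf).2.le).trans ?_
    exact sum_le_sum_of_subset_of_nonneg (subset_univ _) fun _ _ _ => by positivity
  have hcard : (Fintype.card (ι → X) : ℝ) = Fintype.card X ^ #I * Fintype.card X ^ #Iᶜ := by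
    rw [Fintype.card_fun, ← pow_add, card_add_card_compl]
    push_cast
    rfl
  rw [sum_pow_card_filter_apply] at hmarkov
  rw [hcard, div_pow, div_div, div_le_div_iff₀ (by positivity) (by positivity)]
  linarith [mul_le_mul_of_nonneg_left hmarkov (by positivity : (0 : ℝ) ≤ Fintype.card X ^ #I)]

variable [DecidableEq X]

theorem card_filter_exists_apply_mem_mul_le (T : Finset X) :
    #{f : ι → X | ∃ j, f j ∈ T} * Fintype.card X ≤
      Fintype.card ι * #T * Fintype.card X ^ Fintype.card ι := by
  have hsub : ({f | ∃ j, f j ∈ T} : Finset (ι → X)) ⊆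
      (univ ×ˢ T).biUnion fun ja : ι × X => {f : ι → X | f ja.1 = ja.2} := by
    intro f hf
    obtain ⟨j, hj⟩ := (mem_filter.1 hf).2
    exact mem_biUnion.2 ⟨(j, f j), mem_product.2 ⟨mem_univ j, hj⟩, by simp⟩
  have hfiber (j : ι) (a : X) :
      #{f : ι → X | f j = a} * Fintype.card X = Fintype.card X ^ Fintype.card ι := by
    have := Fintype.card_filter_piFinset_const (univ : Finset X) j a
    simp only [Fintype.piFinset_univ, mem_univ, if_true, card_univ] at this
    rw [this, pow_sub_one_mul (Fintype.card_pos_iff.2 ⟨j⟩).ne']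
  calc _ ≤ (∑ ja ∈ univ ×ˢ T, #{f : ι → X | f ja.1 = ja.2}) * Fintype.card X :=
        Nat.mul_le_mul_right _ ((card_le_card hsub).trans card_biUnion_le)
    _ = _ := by simp [sum_mul, hfiber, card_product, mul_assoc]

theorem one_sub_ncard_forall_div_le [Nonempty X] (P : X → Prop) [DecidablePred P] :
    1 - ({f : ι → X | ∀ j, P (f j)}.ncard : ℝ) / Fintype.card (ι → X) ≤
      Fintype.card ι * (#{y | ¬ P y} / Fintype.card X) := by
  have hsplit : ({f : ι → X | ∀ j, P (f j)}.ncard : ℝ) +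
      #{f : ι → X | ∃ j, f j ∈ ({y | ¬ P y} : Finset X)} = Fintype.card (ι → X) := by
    rw [Set.ncard_eq_toFinset_card', Set.toFinset_ofPred]
    exact_mod_cast by
      simpa using card_filter_add_card_filter_not (s := univ) fun f : ι → X => ∀ j, P (f j)
  have hbad : (#{f : ι → X | ∃ j, f j ∈ ({y | ¬ P y} : Finset X)} : ℝ) * Fintype.card X ≤
      Fintype.card ι * #{y | ¬ P y} * Fintype.card (ι → X) := by
    rw [Fintype.card_fun]
    exact_mod_cast card_filter_exists_apply_mem_mul_le _
  have hC : (0 : ℝ) < Fintype.card (ι → X) := by exact_mod_cast Fintype.card_pos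
  have hc : (0 : ℝ) < Fintype.card X := by exact_mod_cast Fintype.card_pos
  rw [one_sub_div hC.ne', div_le_iff₀ hC, ← mul_div_assoc, div_mul_eq_mul_div, le_div_iff₀ hc]
  linear_combination hbad - (Fintype.card X : ℝ) * hsplit

end IndependentCoordinates

def window (N a m : ℕ) : Finset (Fin N) := {i | a ≤ (i : ℕ) ∧ (i : ℕ) < a + m}

theorem card_window {N a m : ℕ} (h : a + m ≤ N) : #(window N a m) = m := by
  have hval : (window N a m).map Fin.valEmbedding = Ico a (a + m) := by
    ext k
    simp only [window, Finset.mem_map, mem_filter, mem_univ, true_and, Fin.valEmbedding_apply,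
      mem_Ico]
    exact ⟨fun ⟨i, hi, hik⟩ => hik ▸ hi, fun hk => ⟨⟨k, by omega⟩, hk, rfl⟩⟩
  rw [← card_map, hval, Nat.card_Ico, Nat.add_sub_cancel_left]

theorem card_perm_apply_zero_eq (α : Fin 4) : #{τ : Equiv.Perm (Fin 4) | τ 0 = α} = 6 := by
  fin_cases α <;> decide

theorem card_perm_apply_zero_ne (α : Fin 4) : #{τ : Equiv.Perm (Fin 4) | ¬ τ 0 = α} = 18 := by
  fin_cases α <;> decide

theorem card_window_deficit_div_le {N a m : ℕ} (h : a + m ≤ N) (α : Fin 4) (t : ℕ) {x : ℝ}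
    (hx0 : 0 < x) (hx1 : x ≤ 1) :
    (#{σ : Fin N → Equiv.Perm (Fin 4) | #{i ∈ window N a m | σ i 0 = α} < t} : ℝ) /
        Fintype.card (Fin N → Equiv.Perm (Fin 4)) ≤ ((x + 3) / 4) ^ m / x ^ t := by
  have := card_filter_card_filter_lt_div_le (fun τ : Equiv.Perm (Fin 4) => τ 0 = α)
    (window N a m) t hx0 hx1
  rw [card_perm_apply_zero_eq, card_perm_apply_zero_ne, card_window h, Fintype.card_perm,
    Fintype.card_fin] at this
  convert this using 3
  norm_num [Nat.factorial]
  ring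

theorem card_not_firstSymbolRegular_div_le (n : ℕ) [DecidablePred (FirstSymbolRegular n)]
    {x : ℝ} (hx0 : 0 < x) (hx1 : x ≤ 1) :
    (#{σ | ¬ FirstSymbolRegular n σ} : ℝ) / Fintype.card (Fin (4 * n) → Equiv.Perm (Fin 4)) ≤
      4 * (4 * n + 1) * (((x + 3) / 4) ^ ⌊20 * log n⌋₊ / x ^ ⌈log n⌉₊) := by
  set m := ⌊20 * log n⌋₊
  set t := ⌈log n⌉₊
  set J : Finset (Fin 4 × ℕ) := univ ×ˢ {a ∈ range (4 * n + 1) | a + m ≤ 4 * n}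
  let E (αa : Fin 4 × ℕ) : Finset (Fin (4 * n) → Equiv.Perm (Fin 4)) :=
    {σ | #{i ∈ window (4 * n) αa.2 m | σ i 0 = αa.1} < t}
  have hsub :
      ({σ | ¬ FirstSymbolRegular n σ} : Finset (Fin (4 * n) → Equiv.Perm (Fin 4))) ⊆
        J.biUnion E := by
    intro σ hσ
    have hirr := (mem_filter.1 hσ).2
    unfold FirstSymbolRegular at hirr
    push Not at hirr
    obtain ⟨α, a, ha, hlt⟩ := hirr
    refine mem_biUnion.2 ⟨(α, a), by simp [J]; omega, ?_⟩
    rw [Set.ncard_eq_toFinset_card', Set.toFinset_ofPred] at hlt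
    simpa [E, window, filter_filter, and_assoc] using hlt
  have hJ : (#J : ℝ) ≤ 4 * (4 * n + 1) := by
    have : #J ≤ 4 * (4 * n + 1) := by
      simpa [J, card_product] using card_filter_le (range (4 * n + 1)) _
    exact_mod_cast this
  calc _ ≤ ∑ αa ∈ J, (#(E αa) : ℝ) / Fintype.card (Fin (4 * n) → Equiv.Perm (Fin 4)) := by
        rw [← sum_div]
        gcongr
        exact_mod_cast (card_le_card hsub).trans card_biUnion_le
    _ ≤ ∑ _αa ∈ J, ((x + 3) / 4) ^ m / x ^ t := by
        refine sum_le_sum fun αa hαa => card_window_deficit_div_le ?_ _ _ hx0 hx1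
        simp only [J, mem_product, mem_filter] at hαa
        exact hαa.2.2
    _ ≤ _ := by
        rw [sum_const, nsmul_eq_mul]
        gcongr

theorem exp_neg_two_le : exp (-2) ≤ 1 / 5 := by
  rw [exp_neg, inv_eq_one_div]
  gcongr
  linarith [quadratic_le_exp_of_nonneg (zero_le_two : (0 : ℝ) ≤ 2)]

theorem chernoff_bound_exp_neg_two_le {n : ℕ} (hn : 1 ≤ n) :
    ((exp (-2) + 3) / 4) ^ ⌊20 * log n⌋₊ / exp (-2) ^ ⌈log n⌉₊ ≤ exp (11 / 5) / n ^ 2 := by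
  have hbase : (exp (-2) + 3) / 4 ≤ exp (-(1 / 5)) := by
    linarith [exp_neg_two_le, add_one_le_exp (-(1 / 5))]
  have hm : 20 * log n < ⌊20 * log n⌋₊ + 1 := Nat.lt_floor_add_one _
  have ht : (⌈log n⌉₊ : ℝ) < log n + 1 := Nat.ceil_lt_add_one (log_natCast_nonneg n)
  calc ((exp (-2) + 3) / 4) ^ ⌊20 * log n⌋₊ / exp (-2) ^ ⌈log n⌉₊
      ≤ exp (-(1 / 5)) ^ ⌊20 * log n⌋₊ / exp (-2) ^ ⌈log n⌉₊ := by gcongr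
    _ = exp (2 * ⌈log n⌉₊ - ⌊20 * log n⌋₊ / 5) := by
        rw [← exp_nat_mul, ← exp_nat_mul, ← exp_sub]
        ring_nf
    _ ≤ exp (11 / 5 - 2 * log n) := exp_le_exp.2 (by linarith)
    _ = exp (11 / 5) / exp (log n) ^ 2 := by rw [exp_sub, sq, ← exp_add, two_mul]
    _ = exp (11 / 5) / n ^ 2 := by rw [exp_log (Nat.cast_pos.2 hn)]

theorem one_sub_regular_fraction_le {n k : ℕ} (hn : 1 ≤ n) (hk : (k : ℝ) ≤ √n) :
    1 - ({z : Fin k → Fin (4 * n) → Equiv.Perm (Fin 4) |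
          ∀ j, FirstSymbolRegular n (z j)}.ncard : ℝ) /
        Fintype.card (Fin k → Fin (4 * n) → Equiv.Perm (Fin 4)) ≤
      20 * exp (11 / 5) / √n := by
  classical
  have hn' : (1 : ℝ) ≤ n := by exact_mod_cast hn
  have hx1 : exp (-2) ≤ 1 := exp_neg_two_le.trans (by norm_num)
  calc _ ≤ k * (#{σ | ¬ FirstSymbolRegular n σ} /
          Fintype.card (Fin (4 * n) → Equiv.Perm (Fin 4)) : ℝ) := by
        simpa using one_sub_ncard_forall_div_le (ι := Fin k) (FirstSymbolRegular n)
    _ ≤ k * (4 * (4 * n + 1) *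
          (((exp (-2) + 3) / 4) ^ ⌊20 * log n⌋₊ / exp (-2) ^ ⌈log n⌉₊)) := by
        gcongr
        exact card_not_firstSymbolRegular_div_le n (exp_pos _) hx1
    _ ≤ √n * (4 * (4 * n + 1) * (exp (11 / 5) / n ^ 2)) := by
        gcongr ?_ * (_ * ?_)
        exact chernoff_bound_exp_neg_two_le hn
    _ ≤ √n * (20 * n * (exp (11 / 5) / n ^ 2)) := by
        gcongr √n * (?_ * _)
        linarith
    _ = 20 * exp (11 / 5) * (√n / n) := by field_simp
    _ = 20 * exp (11 / 5) / √n := by rw [sqrt_div_self', mul_one_div]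

/-- With `k = ⌊√n/(ω(n) ln n)⌋` zombies, each independently choosing
`4n` i.i.d. uniform orderings of the 4 directions (uniform measure on the finite
space of all such choices), the probability that all `k` zombies' sequences are
regular tends to `1` as `n → ∞`. -/
theorem stmt_12 (ω : ℕ → ℝ) (hω : Tendsto ω atTop atTop) :
    Tendsto (fun n : ℕ =>
      ({z : Fin ⌊Real.sqrt n / (ω n * Real.log n)⌋₊ → Fin (4 * n) → Equiv.Perm (Fin 4) |
          ∀ j, FirstSymbolRegular n (z j)}.ncard : ℝ) /
        (Fintype.card
          (Fin ⌊Real.sqrt n / (ω n * Real.log n)⌋₊ → Fin (4 * n) → Equiv.Perm (Fin 4)) : ℝ))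
      atTop (nhds 1) := by
  have hdecay : Tendsto (fun n : ℕ => 1 - 20 * exp (11 / 5) / √n) atTop (nhds 1) := by
    simpa using tendsto_const_nhds.sub
      ((tendsto_sqrt_atTop.comp tendsto_natCast_atTop_atTop).const_div_atTop (20 * exp (11 / 5)))
  refine tendsto_of_tendsto_of_tendsto_of_le_of_le' hdecay tendsto_const_nhds ?_
    (Eventually.of_forall fun n => div_le_one_of_le₀ ?_ (Nat.cast_nonneg _))
  · have hlog : ∀ᶠ n : ℕ in atTop, 1 ≤ log n :=
      (tendsto_log_atTop.comp tendsto_natCast_atTop_atTop).eventually_ge_atTop 1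
    filter_upwards [hω.eventually_ge_atTop 1, hlog, eventually_ge_atTop 1] with n hωn hlogn hn
    have hωlog : 1 ≤ ω n * log n := by nlinarith
    have hk : (⌊√n / (ω n * log n)⌋₊ : ℝ) ≤ √n :=
      (Nat.floor_le (div_nonneg (sqrt_nonneg _) (by linarith))).trans
        (div_le_self (sqrt_nonneg _) hωlog)
    linarith [one_sub_regular_fraction_le hn hk]
  · exact_mod_cast (Set.ncard_le_card _).trans_eq Nat.card_eq_fintype_card
end
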